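/- Let M be a Coxeter matrix on a type S with associated Coxeter system (W, cs). Let I ⊆ S, s ∈ S with s ∉ I, and let (t_1, …, t_n) be a reduced word with all t_i ∈ I. If the word (s, t_1, …, t_n, s) is not reduced (i.e., ℓ(cs.simple s · cs.simple t_1 · … · cs.simple t_n · cs.simple s) < n + 2), then M s t_r = 2 for every r ∈ {1, …, n}. -/

import Mathlib

/-!
Write `w = s_{t_1} ⋯ s_{t_n}`. As `s` is not a letter of `l`, it is neither a left nor a right
descent of `w`, so `ℓ(s w) = ℓ(w s) = n + 1` and the hypothesis makes `s` a left descent of `w s`.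
By the exchange condition the letter deleted from `l ++ [s]` must be the final `s` (deleting another
one would write `s_s` as a word avoiding `s`), so `s w = w s`. Then `t_1` is a left descent of
`s w`, and exchanging in `s t_1 ⋯ t_n` writes `s t_1 s` as a word avoiding `s`, which forces
`m(s, t_1) = 2`. So `s` commutes with `t_1`, hence with `t_2 ⋯ t_n`, and we induct.

Both facts about words avoiding `s` come from the geometric representation: every `σ_t`, `t ≠ s`,
preserves the `α_s`-coordinate, whereas `σ_s α_s = -α_s` and `σ_s σ_t σ_s α_s` has
`α_s`-coordinate `1 - 4 cos² (π / m(s, t))`. The exchange condition comes from the fact that the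
parity of the number of occurrences of a reflection in the left inversion sequence of a word only
depends on the product of the word.
-/

open Real

namespace CoxeterMatrix

variable {S : Type*} (M : CoxeterMatrix S)

/-- `-cos (π / m)`, read as `-1 = -cos 0` when `m = 0` encodes `m = ∞`. -/
noncomputable def cosMatrix (i j : S) : ℝ := if M i j = 0 then -1 else -cos (π / M i j)

theorem cosMatrix_comm (i j : S) : M.cosMatrix i j = M.cosMatrix j i := by
  rw [cosMatrix, cosMatrix, M.symmetric]

@[simp]
theorem cosMatrix_self (i : S) : M.cosMatrix i i = 1 := by
  simp [cosMatrix]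

theorem cosMatrix_of_ne_zero {i j : S} (h : M i j ≠ 0) : M.cosMatrix i j = -cos (π / M i j) :=
  if_neg h

theorem eq_two_of_cosMatrix_eq_zero {i j : S} (hij : i ≠ j) (h : M.cosMatrix i j = 0) :
    M i j = 2 := by
  have h0 : M i j ≠ 0 := fun h0 => by simp [cosMatrix, h0] at h
  rw [cosMatrix_of_ne_zero M h0, neg_eq_zero, Real.cos_eq_zero_iff] at h
  obtain ⟨k, hk⟩ := h
  have hm : (0 : ℝ) < M i j := by exact_mod_cast Nat.pos_of_ne_zero h0
  have hkm : ((2 * k + 1) * M i j : ℝ) = 2 := by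
    field_simp at hk
    nlinarith [Real.pi_pos]
  have : (2 * k + 1) * (M i j : ℤ) = 2 := by exact_mod_cast hkm
  have hle : (M i j : ℤ) ≤ 2 := Int.le_of_dvd two_pos ⟨2 * k + 1, by linarith⟩
  have h1 := M.off_diagonal i j hij
  omega

/-- `v ↦ B(α_i, v)`, with the simple roots `α_j = single j 1`. -/
noncomputable def cosForm (i : S) : (S →₀ ℝ) →ₗ[ℝ] ℝ :=
  Finsupp.linearCombination ℝ (M.cosMatrix i)

@[simp]
theorem cosForm_single (i j : S) (a : ℝ) :
    M.cosForm i (Finsupp.single j a) = a * M.cosMatrix i j := by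
  simp [cosForm]

noncomputable def geomReflection (i : S) : Module.End ℝ (S →₀ ℝ) :=
  LinearMap.id - (2 • M.cosForm i).smulRight (Finsupp.single i 1)

theorem geomReflection_apply (i : S) (v : S →₀ ℝ) :
    M.geomReflection i v = v - (2 * M.cosForm i v) • Finsupp.single i 1 := by
  simp [geomReflection]

theorem geomReflection_single (i j : S) :
    M.geomReflection i (Finsupp.single j 1) =
      Finsupp.single j 1 - (2 * M.cosMatrix i j) • Finsupp.single i 1 := by
  simp [geomReflection_apply]

theorem geomReflection_single_self (i : S) :
    M.geomReflection i (Finsupp.single i 1) = -Finsupp.single i 1 := by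
  rw [geomReflection_single, cosMatrix_self]; module

theorem geomReflection_apply_of_cosForm_eq_zero {i : S} {v : S →₀ ℝ} (h : M.cosForm i v = 0) :
    M.geomReflection i v = v := by
  simp [geomReflection_apply, h]

theorem geomReflection_apply_apply_of_ne {i s : S} (h : i ≠ s) (v : S →₀ ℝ) :
    M.geomReflection i v s = v s := by
  simp [geomReflection_apply, h]

theorem geomReflection_mul_self (i : S) : M.geomReflection i * M.geomReflection i = 1 := by
  refine LinearMap.ext fun v => ?_
  rw [Module.End.mul_apply, geomReflection_apply M i v, map_sub, map_smul,
    geomReflection_apply M i v, geomReflection_single_self, Module.End.one_apply]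
  module

section Dihedral

variable {i j : S} {θ : ℝ}

/-- `σ_i σ_j` rotates the plane of `α_i, α_j` by `2θ`; the factor `sin θ` on the left makes the
formula hold for every `θ`. -/
theorem sin_smul_pow_geomReflection_mul_single (hθ : M.cosMatrix i j = -cos θ) (k : ℕ) :
    sin θ • ((M.geomReflection i * M.geomReflection j) ^ k) (Finsupp.single i 1) =
        sin ((2 * k + 1) * θ) • Finsupp.single i 1 + sin (2 * k * θ) • Finsupp.single j 1 ∧
      sin θ • ((M.geomReflection i * M.geomReflection j) ^ k) (Finsupp.single j 1) =
        -(sin (2 * k * θ) • Finsupp.single i 1 + sin ((2 * k - 1) * θ) • Finsupp.single j 1) := by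
  have hθ' : M.cosMatrix j i = -cos θ := by rw [cosMatrix_comm, hθ]
  induction k with
  | zero => simp [sin_neg]
  | succ k ih =>
    have hi : (M.geomReflection i * M.geomReflection j) (Finsupp.single i 1) =
        (4 * cos θ ^ 2 - 1) • Finsupp.single i 1 + (2 * cos θ) • Finsupp.single j 1 := by
      rw [Module.End.mul_apply, geomReflection_single, map_sub, map_smul, geomReflection_single,
        geomReflection_single, cosMatrix_self, hθ, hθ']
      module
    have hj : (M.geomReflection i * M.geomReflection j) (Finsupp.single j 1) =
        (-(2 * cos θ)) • Finsupp.single i 1 - Finsupp.single j 1 := by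
      rw [Module.End.mul_apply, geomReflection_single_self, map_neg, geomReflection_single, hθ]
      module
    rw [pow_succ, Module.End.mul_apply, hi, Module.End.mul_apply, hj]
    simp only [map_add, map_sub, map_smul, smul_add, smul_sub, smul_comm (sin θ), ih.1, ih.2]
    push_cast
    have h1 : sin ((2 * k + 1) * θ) = 2 * cos θ * sin (2 * k * θ) - sin ((2 * k - 1) * θ) := by
      have := two_mul_sin_mul_cos (2 * k * θ) θ
      ring_nf at this ⊢; linarith
    have h2 : sin (2 * (k + 1) * θ) = 2 * cos θ * sin ((2 * k + 1) * θ) - sin (2 * k * θ) := by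
      have := two_mul_sin_mul_cos ((2 * k + 1) * θ) θ
      ring_nf at this ⊢; linarith
    have h3 : sin ((2 * (k + 1) + 1) * θ) =
        2 * cos θ * sin (2 * (k + 1) * θ) - sin ((2 * k + 1) * θ) := by
      have := two_mul_sin_mul_cos (2 * (k + 1) * θ) θ
      ring_nf at this ⊢; linarith
    have h4 : (2 * (k + 1 : ℝ) - 1) * θ = (2 * k + 1) * θ := by ring
    rw [h3, h4, h2, h1]
    constructor <;> module

theorem sin_pi_div_ne_zero (hij : i ≠ j) (h0 : M i j ≠ 0) : sin (π / M i j) ≠ 0 := by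
  have hm : (2 : ℝ) ≤ M i j := by
    have := M.off_diagonal i j hij
    exact_mod_cast (by omega : 2 ≤ M i j)
  refine (sin_pos_of_pos_of_lt_pi (by positivity) ?_).ne'
  rw [div_lt_iff₀ (by positivity)]
  nlinarith [pi_pos]

theorem cosMatrix_sq_ne_one (hij : i ≠ j) (h0 : M i j ≠ 0) : M.cosMatrix i j ^ 2 ≠ 1 := by
  rw [cosMatrix_of_ne_zero M h0, neg_sq, ← sin_sq_add_cos_sq (π / M i j), ne_eq,
    right_eq_add]
  exact pow_ne_zero 2 (M.sin_pi_div_ne_zero hij h0)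

theorem pow_geomReflection_mul_single (hij : i ≠ j) (h0 : M i j ≠ 0) :
    ((M.geomReflection i * M.geomReflection j) ^ M i j) (Finsupp.single i 1) =
        Finsupp.single i 1 ∧
      ((M.geomReflection i * M.geomReflection j) ^ M i j) (Finsupp.single j 1) =
        Finsupp.single j 1 := by
  have hsin := M.sin_pi_div_ne_zero hij h0
  have h2π : 2 * (M i j : ℝ) * (π / M i j) = 2 * π := by field_simp
  obtain ⟨hi, hj⟩ :=
    M.sin_smul_pow_geomReflection_mul_single (cosMatrix_of_ne_zero M h0) (M i j)
  rw [add_mul, h2π, one_mul, sin_two_pi, add_comm (2 * π), sin_add_two_pi] at hi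
  rw [sub_mul, h2π, one_mul, sin_two_pi, sin_two_pi_sub] at hj
  constructor
  · exact smul_right_injective _ hsin (by simpa using hi)
  · exact smul_right_injective _ hsin (by simpa using hj)

theorem exists_eq_add_smul_single_add_smul_single (hc : M.cosMatrix i j ^ 2 ≠ 1)
    (v : S →₀ ℝ) : ∃ (v' : S →₀ ℝ) (a b : ℝ),
      v = v' + a • Finsupp.single i 1 + b • Finsupp.single j 1 ∧
        M.cosForm i v' = 0 ∧ M.cosForm j v' = 0 := by
  have hc' : 1 - M.cosMatrix i j ^ 2 ≠ 0 := sub_ne_zero.mpr (Ne.symm hc)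
  set a := (M.cosForm i v - M.cosMatrix i j * M.cosForm j v) / (1 - M.cosMatrix i j ^ 2)
  set b := (M.cosForm j v - M.cosMatrix i j * M.cosForm i v) / (1 - M.cosMatrix i j ^ 2)
  refine ⟨v - a • Finsupp.single i 1 - b • Finsupp.single j 1, a, b, by abel, ?_, ?_⟩ <;>
  · simp only [map_sub, map_smul, cosForm_single, cosMatrix_self, cosMatrix_comm M j i,
      smul_eq_mul, a, b]
    field_simp
    ring

theorem isLiftable_geomReflection : M.IsLiftable M.geomReflection := by
  intro i j
  rcases eq_or_ne i j with rfl | hij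
  · rw [M.diagonal, pow_one, geomReflection_mul_self]
  rcases eq_or_ne (M i j) 0 with h0 | h0
  · rw [h0, pow_zero]
  set T := M.geomReflection i * M.geomReflection j
  obtain ⟨hi, hj⟩ := M.pow_geomReflection_mul_single hij h0
  refine LinearMap.ext fun v => ?_
  obtain ⟨v', a, b, rfl, hv'i, hv'j⟩ :=
    M.exists_eq_add_smul_single_add_smul_single (M.cosMatrix_sq_ne_one hij h0) v
  have hTv' : T v' = v' := by
    rw [Module.End.mul_apply, geomReflection_apply_of_cosForm_eq_zero M hv'j,
      geomReflection_apply_of_cosForm_eq_zero M hv'i]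
  have hTv'_pow : (T ^ M i j) v' = v' := by
    rw [Module.End.pow_apply, Function.iterate_fixed hTv']
  rw [Module.End.one_apply, map_add, map_add, map_smul, map_smul, hTv'_pow, hi, hj]

end Dihedral

end CoxeterMatrix

namespace CoxeterSystem

variable {S W : Type*} {M : CoxeterMatrix S} [Group W] (cs : CoxeterSystem M W)

noncomputable def geometricRepresentation : W →* Module.End ℝ (S →₀ ℝ) :=
  cs.lift ⟨M.geomReflection, M.isLiftable_geomReflection⟩

@[simp]
theorem geometricRepresentation_simple (i : S) :
    cs.geometricRepresentation (cs.simple i) = M.geomReflection i :=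
  cs.lift_apply_simple M.isLiftable_geomReflection i

theorem geometricRepresentation_wordProd_apply_of_notMem {s : S} {ω : List S} (hs : s ∉ ω)
    (v : S →₀ ℝ) : cs.geometricRepresentation (cs.wordProd ω) v s = v s := by
  induction ω with
  | nil => simp
  | cons i ω ih =>
    rw [List.mem_cons, not_or] at hs
    rw [wordProd_cons, map_mul, Module.End.mul_apply, geometricRepresentation_simple,
      M.geomReflection_apply_apply_of_ne (Ne.symm hs.1), ih hs.2]

theorem simple_ne_wordProd_of_notMem {s : S} {ω : List S} (hs : s ∉ ω) :
    cs.simple s ≠ cs.wordProd ω := by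
  intro h
  have := cs.geometricRepresentation_wordProd_apply_of_notMem hs (Finsupp.single s 1)
  rw [← h, geometricRepresentation_simple, M.geomReflection_single_self] at this
  norm_num at this

theorem coxeterMatrix_eq_two_of_conj_eq_wordProd {s t : S} {ω : List S} (hst : s ≠ t)
    (hs : s ∉ ω) (h : cs.simple s * cs.simple t * cs.simple s = cs.wordProd ω) : M s t = 2 := by
  have hconj : cs.geometricRepresentation (cs.simple s * cs.simple t * cs.simple s)
      (Finsupp.single s 1) = (1 - 4 * M.cosMatrix s t ^ 2) • Finsupp.single s 1 +
        (2 * M.cosMatrix s t) • Finsupp.single t 1 := by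
    rw [map_mul, map_mul, Module.End.mul_apply, Module.End.mul_apply,
      geometricRepresentation_simple, geometricRepresentation_simple,
      M.geomReflection_single_self, map_neg, M.geomReflection_single, map_neg, map_sub, map_smul,
      M.geomReflection_single_self, M.geomReflection_single, M.cosMatrix_comm t s]
    module
  have := cs.geometricRepresentation_wordProd_apply_of_notMem hs (Finsupp.single s 1)
  rw [← h, hconj, Finsupp.add_apply, Finsupp.smul_apply, Finsupp.smul_apply,
    Finsupp.single_eq_same, Finsupp.single_eq_of_ne hst, smul_eq_mul, smul_eq_mul] at this
  have hsq : M.cosMatrix s t ^ 2 = 0 := by linarith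
  exact M.eq_two_of_cosMatrix_eq_zero hst (pow_eq_zero_iff two_ne_zero |>.mp hsq)

section Parity

open scoped Classical

/-- `F t` is the parity of the inversion `t`: this is Bourbaki's action of `s_i` on
`T × {±1}`, `(t, ε) ↦ (s_i t s_i, ε · (-1) ^ [t = s_i])`, acting on all functions at once. -/
noncomputable def parityAction (i : S) : Function.End (W → ZMod 2) :=
  fun F t => F (cs.simple i * t * cs.simple i) + if t = cs.simple i then 1 else 0

theorem count_leftInvSeq_cons (i : S) (ω : List S) (t : W) :
    (cs.leftInvSeq (i :: ω)).count t =
      (cs.leftInvSeq ω).count (cs.simple i * t * cs.simple i) +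
        if t = cs.simple i then 1 else 0 := by
  have hconj : ((cs.leftInvSeq ω).map (MulAut.conj (cs.simple i))).count t =
      (cs.leftInvSeq ω).count (cs.simple i * t * cs.simple i) := by
    have ht : t = MulAut.conj (cs.simple i) (cs.simple i * t * cs.simple i) := by
      simp [mul_assoc]
    conv_lhs => rw [ht]
    exact List.count_map_of_injective _ _ (MulAut.conj _).injective _
  rw [leftInvSeq, List.count_cons, hconj]
  simp only [beq_iff_eq, @eq_comm _ (cs.simple i)]

theorem prod_map_parityAction_apply (ω : List S) (F : W → ZMod 2) (t : W) :
    (ω.map cs.parityAction).prod F t =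
      F ((cs.wordProd ω)⁻¹ * t * cs.wordProd ω) + (cs.leftInvSeq ω).count t := by
  induction ω generalizing t with
  | nil =>
    simp only [List.map_nil, List.prod_nil, wordProd_nil, inv_one, one_mul, mul_one,
      leftInvSeq_nil, List.count_nil, Nat.cast_zero, add_zero]
    rfl
  | cons i ω ih =>
    change cs.parityAction i ((ω.map cs.parityAction).prod F) t = _
    rw [parityAction, ih, count_leftInvSeq_cons, wordProd_cons]
    push_cast
    simp only [mul_inv_rev, inv_simple, mul_assoc, add_assoc]

theorem prod_map_alternatingWord_two_mul {G : Type*} [Monoid G] (f : S → G) (i j : S) (k : ℕ) :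
    ((alternatingWord i j (2 * k)).map f).prod = (f i * f j) ^ k := by
  induction k with
  | zero => simp [alternatingWord]
  | succ k ih =>
    rw [mul_add_one, alternatingWord_succ', alternatingWord_succ']
    simp [ih, pow_succ', mul_assoc]

theorem leftInvSeq_alternatingWord_two_mul (i j : S) (p : ℕ) :
    cs.leftInvSeq (alternatingWord i j (2 * p)) =
      (List.range (2 * p)).map fun k => cs.simple i * (cs.simple j * cs.simple i) ^ k := by
  refine List.ext_getElem (by simp) fun k hk _ => ?_
  rw [cs.getElem_leftInvSeq_alternatingWord i j p k (by simpa using hk),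
    prod_alternatingWord_eq_mul_pow]
  simp [Nat.add_div_of_dvd_right]

theorem isLiftable_parityAction : M.IsLiftable cs.parityAction := by
  intro i j
  funext F t
  have hperiodic : (fun k => cs.simple i * (cs.simple j * cs.simple i) ^ k) ∘ (M i j + ·) =
      fun k => cs.simple i * (cs.simple j * cs.simple i) ^ k := by
    funext k
    rw [Function.comp_apply, pow_add, M.symmetric, simple_mul_simple_pow, one_mul]
  have hprod : cs.wordProd (alternatingWord i j (2 * M i j)) = 1 := by
    simp [prod_alternatingWord_eq_mul_pow]
  rw [← prod_map_alternatingWord_two_mul, prod_map_parityAction_apply, hprod,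
    leftInvSeq_alternatingWord_two_mul, two_mul, List.range_add, List.map_append, List.map_map,
    hperiodic, List.count_append, Nat.cast_add, CharTwo.add_self_eq_zero, add_zero, inv_one,
    one_mul, mul_one]
  rfl

noncomputable def parityRepresentation : W →* Function.End (W → ZMod 2) :=
  cs.lift ⟨cs.parityAction, cs.isLiftable_parityAction⟩

theorem parityRepresentation_wordProd (ω : List S) :
    cs.parityRepresentation (cs.wordProd ω) = (ω.map cs.parityAction).prod := by
  rw [wordProd, map_list_prod, List.map_map]
  congr 1
  exact List.map_congr_left fun i _ => cs.lift_apply_simple cs.isLiftable_parityAction i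

theorem count_leftInvSeq_cast_eq_of_wordProd_eq {ω ω' : List S}
    (h : cs.wordProd ω = cs.wordProd ω') (t : W) :
    ((cs.leftInvSeq ω).count t : ZMod 2) = (cs.leftInvSeq ω').count t := by
  have := congrArg (fun w => cs.parityRepresentation w 0 t) h
  simpa [parityRepresentation_wordProd, prod_map_parityAction_apply] using this

end Parity

theorem simple_mem_leftInvSeq_of_isLeftDescent {ω : List S} {i : S}
    (h : cs.IsLeftDescent (cs.wordProd ω) i) : cs.simple i ∈ cs.leftInvSeq ω := by
  classical
  obtain ⟨ω', hω', hω'_eq⟩ := cs.exists_isReduced (cs.simple i * cs.wordProd ω)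
  have hnotMem : cs.simple i ∉ cs.leftInvSeq ω' := fun hmem => by
    have := (cs.isLeftInversion_of_mem_leftInvSeq hω' hmem).2
    rw [← hω'_eq, simple_mul_simple_cancel_left] at this
    exact lt_asymm h this
  have hcount := cs.count_leftInvSeq_cast_eq_of_wordProd_eq (ω := i :: ω') (ω' := ω)
    (by rw [wordProd_cons, ← hω'_eq, simple_mul_simple_cancel_left]) (cs.simple i)
  rw [count_leftInvSeq_cons, simple_mul_simple_self, one_mul, List.count_eq_zero.mpr hnotMem,
    if_pos rfl] at hcount
  refine List.count_pos_iff.mp (Nat.pos_of_ne_zero fun h0 => ?_)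
  rw [h0] at hcount
  exact one_ne_zero (by exact_mod_cast hcount)

theorem exists_simple_mul_wordProd_eq_wordProd_eraseIdx {ω : List S} {i : S}
    (h : cs.IsLeftDescent (cs.wordProd ω) i) :
    ∃ j < ω.length, cs.simple i * cs.wordProd ω = cs.wordProd (ω.eraseIdx j) := by
  obtain ⟨j, hj, hjt⟩ := List.getElem_of_mem (cs.simple_mem_leftInvSeq_of_isLeftDescent h)
  refine ⟨j, by simpa using hj, ?_⟩
  rw [← getD_leftInvSeq_mul_wordProd, List.getD_eq_getElem _ _ hj, hjt]

theorem simple_mul_wordProd_ne_wordProd {s : S} {ω ω' : List S} (hω : s ∉ ω) (hω' : s ∉ ω') :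
    cs.simple s * cs.wordProd ω ≠ cs.wordProd ω' := by
  intro h
  refine cs.simple_ne_wordProd_of_notMem (s := s) (ω := ω' ++ ω.reverse) ?_ ?_
  · simp [hω, hω']
  · rw [wordProd_append, wordProd_reverse, ← h, mul_inv_cancel_right]

theorem not_isLeftDescent_of_notMem {s : S} {ω : List S} (hs : s ∉ ω) :
    ¬cs.IsLeftDescent (cs.wordProd ω) s := fun h => by
  obtain ⟨j, -, hj⟩ := cs.exists_simple_mul_wordProd_eq_wordProd_eraseIdx h
  exact cs.simple_mul_wordProd_ne_wordProd hs (fun h => hs (List.mem_of_mem_eraseIdx h)) hj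

theorem length_simple_mul_wordProd_of_notMem {s : S} {ω : List S} (hs : s ∉ ω) :
    cs.length (cs.simple s * cs.wordProd ω) = cs.length (cs.wordProd ω) + 1 :=
  cs.not_isLeftDescent_iff.mp (cs.not_isLeftDescent_of_notMem hs)

theorem length_wordProd_mul_simple_of_notMem {s : S} {ω : List S} (hs : s ∉ ω) :
    cs.length (cs.wordProd ω * cs.simple s) = cs.length (cs.wordProd ω) + 1 := by
  have := cs.length_simple_mul_wordProd_of_notMem (ω := ω.reverse) (by simpa using hs)
  rwa [wordProd_reverse, ← inv_simple, ← mul_inv_rev, length_inv, length_inv] at this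

theorem commute_simple_wordProd_of_isLeftDescent {s : S} {ω : List S} (hs : s ∉ ω)
    (h : cs.IsLeftDescent (cs.wordProd ω * cs.simple s) s) :
    Commute (cs.simple s) (cs.wordProd ω) := by
  rw [← wordProd_singleton, ← wordProd_append] at h
  obtain ⟨j, hj, hexch⟩ := cs.exists_simple_mul_wordProd_eq_wordProd_eraseIdx h
  rw [List.length_append, List.length_singleton, Nat.lt_succ_iff] at hj
  rcases hj.lt_or_eq with hj | rfl
  · rw [List.eraseIdx_append_of_lt_length hj, wordProd_append, wordProd_append,
      ← mul_assoc, mul_left_inj] at hexch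
    exact absurd hexch (cs.simple_mul_wordProd_ne_wordProd hs
      (fun h => hs (List.mem_of_mem_eraseIdx h)))
  · rw [List.eraseIdx_append_of_length_le le_rfl, Nat.sub_self, List.eraseIdx_cons_zero,
      List.append_nil, wordProd_append, wordProd_singleton, ← mul_assoc] at hexch
    rw [Commute, SemiconjBy]
    nth_rw 2 [← hexch]
    rw [simple_mul_simple_cancel_right]

theorem coxeterMatrix_eq_two_of_isLeftDescent {s t : S} {ω : List S} (hs : s ∉ t :: ω)
    (h : cs.IsLeftDescent (cs.simple s * cs.wordProd (t :: ω)) t) : M s t = 2 := by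
  rw [← wordProd_cons] at h
  obtain ⟨j, -, hexch⟩ := cs.exists_simple_mul_wordProd_eq_wordProd_eraseIdx h
  rcases j with _ | j
  · rw [List.eraseIdx_cons_zero, cs.wordProd_cons s] at hexch
    refine absurd ?_ (cs.simple_mul_wordProd_ne_wordProd hs (List.not_mem_of_not_mem_cons hs))
    rw [← cs.simple_mul_simple_cancel_left (w := cs.simple s * _) t, hexch, wordProd_cons,
      simple_mul_simple_cancel_left]
  · rw [List.eraseIdx_cons_succ, cs.wordProd_cons s, cs.wordProd_cons s] at hexch
    have hconj : cs.wordProd ((t :: ω).eraseIdx j) =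
        cs.simple s * cs.simple t * cs.simple s * cs.wordProd (t :: ω) := by
      rw [← cs.simple_mul_simple_cancel_left (w := cs.wordProd _) s, ← hexch]
      simp only [mul_assoc]
    refine cs.coxeterMatrix_eq_two_of_conj_eq_wordProd
      (ω := (t :: ω).eraseIdx j ++ (t :: ω).reverse) (fun hst => hs (hst ▸ List.mem_cons_self))
      ?_ ?_
    · simp only [List.mem_append, List.mem_reverse, not_or]
      exact ⟨fun h => hs (List.mem_of_mem_eraseIdx h), hs⟩
    · rw [wordProd_append, wordProd_reverse, hconj, mul_inv_cancel_right]

theorem commute_simple_simple_of_coxeterMatrix_eq_two {s t : S} (h : M s t = 2) :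
    Commute (cs.simple s) (cs.simple t) := by
  have := cs.simple_mul_simple_pow s t
  rw [h, sq] at this
  rw [Commute, SemiconjBy, eq_inv_of_mul_eq_one_left this, mul_inv_rev, inv_simple, inv_simple]

theorem coxeterMatrix_eq_two_of_commute {s : S} {ω : List S} (hs : s ∉ ω)
    (hred : cs.IsReduced ω) (hcomm : Commute (cs.simple s) (cs.wordProd ω)) :
    ∀ x ∈ ω, M s x = 2 := by
  induction ω with
  | nil => simp
  | cons t ω ih =>
    have hdesc : cs.IsLeftDescent (cs.simple s * cs.wordProd (t :: ω)) t := by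
      rw [IsLeftDescent, length_simple_mul_wordProd_of_notMem cs hs, hred.eq, hcomm.eq,
        wordProd_cons, mul_assoc, simple_mul_simple_cancel_left, List.length_cons]
      calc cs.length (cs.wordProd ω * cs.simple s) ≤ cs.length (cs.wordProd ω) + 1 := by
            simpa using cs.length_mul_le (cs.wordProd ω) (cs.simple s)
        _ < ω.length + 1 + 1 := by linarith [cs.length_wordProd_le ω]
    have hst := cs.coxeterMatrix_eq_two_of_isLeftDescent hs hdesc
    have hcomm' : Commute (cs.simple s) (cs.wordProd ω) := by
      rw [wordProd_cons] at hcomm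
      simpa using ((cs.commute_simple_simple_of_coxeterMatrix_eq_two hst).inv_right).mul_right hcomm
    rintro x (_ | ⟨_, hx⟩)
    · exact hst
    · exact ih (List.not_mem_of_not_mem_cons hs) (by simpa using hred.drop 1) hcomm' x hx

end CoxeterSystem

/-- Let `(W, cs)` be the Coxeter system of a Coxeter matrix `M` on `S`, let `I ⊆ S`,
`s ∈ S` with `s ∉ I`, and let `l = (t₁, …, t_n)` be a reduced word all of whose letters lie
in `I`.  If the word `(s, t₁, …, t_n, s)` is not reduced, i.e.
`ℓ(s · t₁ ⋯ t_n · s) < n + 2`, then `M s t_r = 2` for every letter `t_r` of `l`. -/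
theorem M_eq_two_of_not_reduced {S : Type*} {M : CoxeterMatrix S}
    {W : Type*} [Group W] (cs : CoxeterSystem M W)
    (I : Set S) (s : S) (hs : s ∉ I)
    (l : List S) (hlI : ∀ x ∈ l, x ∈ I) (hred : cs.IsReduced l)
    (hnotred : cs.length (cs.wordProd (s :: (l ++ [s]))) < l.length + 2) :
    ∀ x ∈ l, M s x = 2 := by
  have hsl : s ∉ l := fun h => hs (hlI s h)
  have hlen : cs.length (cs.wordProd l * cs.simple s) = l.length + 1 := by
    rw [cs.length_wordProd_mul_simple_of_notMem hsl, hred.eq]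
  have hdesc : cs.IsLeftDescent (cs.wordProd l * cs.simple s) s := by
    rw [cs.wordProd_cons, cs.wordProd_append, cs.wordProd_singleton] at hnotred
    rw [CoxeterSystem.IsLeftDescent]
    rcases cs.length_simple_mul (cs.wordProd l * cs.simple s) s with h | h <;> omega
  exact cs.coxeterMatrix_eq_two_of_commute hsl hred
    (cs.commute_simple_wordProd_of_isLeftDescent hsl hdesc)
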